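/- For every integer K ≥ 7 and every real α with 0.99·β_K ≤ α ≤ α_K*, one has L_K(α, K) < −0.016. -/

import Mathlib

set_option maxHeartbeats 1600000

/-- `Q(z) = z(e^z − 1)/(e^z − 1 − z)`. -/
noncomputable def Qfun (z : ℝ) : ℝ := z * (Real.exp z - 1) / (Real.exp z - 1 - z)

/-- `exp₂(z) = e^z − 1 − z`. -/
noncomputable def exp2 (z : ℝ) : ℝ := Real.exp z - 1 - z

/-- Entropy `H(α) = −α ln α − (1−α) ln(1−α)` (with `0 · ln 0 = 0`,
automatic since `Real.log 0 = 0`). -/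
noncomputable def Hent (a : ℝ) : ℝ := -(a * Real.log a) - (1 - a) * Real.log (1 - a)

/-- `J_K(α, (ζ₁,ζ₂); c)`, with `lam` the unique positive solution of `Q(lam) = c`
passed as an explicit parameter. -/
noncomputable def JK (K : ℕ) (a z1 z2 c lam : ℝ) : ℝ :=
  (1 / (K : ℝ)) * Hent a + a * Real.log (a / z1) + (1 - a) * Real.log ((1 - a) / z2)
    + (1 / c) * Real.log
        ((exp2 (lam * (z2 + z1)) + exp2 (lam * (z2 - z1))) / (2 * exp2 lam))

/-- `L_K(α, c) = c · J_K(α, ζ_lin(α); c)` where `ζ_lin(α) = (α, 1−α)`. -/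
noncomputable def LK (K : ℕ) (a c lam : ℝ) : ℝ := c * JK K a a (1 - a) c lam

/-- `β_K = exp(−(1/K + ln √(K−1) − 1 + K/(2(K−1)))/(1/2 − 1/K))`. -/
noncomputable def betaK (K : ℕ) : ℝ :=
  Real.exp (-(1 / (K : ℝ) + Real.log (Real.sqrt ((K : ℝ) - 1)) - 1
      + (K : ℝ) / (2 * ((K : ℝ) - 1))) / (1 / 2 - 1 / (K : ℝ)))

namespace Stmt10Aux

lemma hent_eq (a : ℝ) : Hent a = Real.binEntropy a := by
  unfold Hent Real.binEntropy
  rw [Real.log_inv, Real.log_inv]; ring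

lemma hent_mono {a c : ℝ} (h0 : 0 ≤ a) (hac : a ≤ c) (hc : c ≤ 1/2) :
    Hent a ≤ Hent c := by
  rw [hent_eq, hent_eq]
  rcases eq_or_lt_of_le hac with rfl | h
  · exact le_refl _
  · refine le_of_lt (Real.binEntropy_strictMonoOn ⟨h0, ?_⟩ ⟨by linarith, ?_⟩ h) <;>
      rw [show ((2:ℝ)⁻¹ = 1/2) by norm_num] <;> linarith

lemma exp_neg_le {y c : ℝ} (h : 1 ≤ y * Real.exp c) : Real.exp (-c) ≤ y := by
  have h1 : Real.exp (-c) * Real.exp c = 1 := by rw [← Real.exp_add]; simp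
  nlinarith [Real.exp_pos c, Real.exp_pos (-c)]

lemma log_lower {y c : ℝ} (hy : 0 < y) (h : 1 ≤ y * Real.exp c) : -c ≤ Real.log y :=
  (Real.le_log_iff_exp_le hy).2 (exp_neg_le h)

lemma log_upper {y c : ℝ} (hy : 0 < y) (h : y ≤ Real.exp c) : Real.log y ≤ c :=
  (Real.log_le_iff_le_exp hy).2 h

lemma exp_neg_ge_pow8 {d : ℝ} (h0 : 0 ≤ 1 - d/8) : (1 - d/8)^8 ≤ Real.exp (-d) := by
  have h2 := Real.exp_nat_mul (-d/8) 8
  have h3 : 1 - d / 8 ≤ Real.exp (-d / 8) := by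
    have := Real.add_one_le_exp (-d/8); linarith
  calc (1 - d/8)^8 ≤ (Real.exp (-d/8))^8 := pow_le_pow_left₀ h0 h3 8
    _ = Real.exp (-d) := by rw [← h2]; congr 1; push_cast; ring

lemma E1 : (-0.0101:ℝ) ≤ Real.log 0.99 := by
  apply log_lower (by norm_num)
  have h := Real.sum_le_exp_of_nonneg (x := 0.0101) (by norm_num) 3
  simp [Finset.sum_range_succ] at h
  norm_num [Nat.factorial] at h; nlinarith [Real.exp_pos (0.0101:ℝ)]

lemma E2 : (830:ℝ) ≤ Real.exp 6.916 := by
  have h := Real.sum_le_exp_of_nonneg (x := 6.916) (by norm_num) 10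
  simp [Finset.sum_range_succ] at h
  norm_num [Nat.factorial] at h; linarith

lemma E3 : Real.log 6.916 ≤ 1.9342 := by
  apply log_upper (by norm_num)
  have h := Real.sum_le_exp_of_nonneg (x := 1.9342) (by norm_num) 12
  simp [Finset.sum_range_succ] at h
  norm_num [Nat.factorial] at h; linarith

lemma E4 : Real.log 7 ≤ 1.9465 := by
  apply log_upper (by norm_num)
  have h := Real.sum_le_exp_of_nonneg (x := 1.9465) (by norm_num) 12
  simp [Finset.sum_range_succ] at h
  norm_num [Nat.factorial] at h; linarith

lemma E5 : Real.log 1.16 ≤ 0.1487 := by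
  apply log_upper (by norm_num)
  have h := Real.sum_le_exp_of_nonneg (x := 0.1487) (by norm_num) 5
  simp [Finset.sum_range_succ] at h
  norm_num [Nat.factorial] at h; linarith

lemma E6 : (9.66:ℝ) ≤ Real.exp 2.269 := by
  have h := Real.sum_le_exp_of_nonneg (x := 2.269) (by norm_num) 11
  simp [Finset.sum_range_succ] at h
  norm_num [Nat.factorial] at h; linarith

lemma E7 : (24.49:ℝ) ≤ Real.exp 3.2 := by
  have h := Real.sum_le_exp_of_nonneg (x := 3.2) (by norm_num) 12
  simp [Finset.sum_range_succ] at h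
  norm_num [Nat.factorial] at h; linarith

lemma EA1 : (-1.464:ℝ) ≤ Real.log 0.2314 := by
  apply log_lower (by norm_num)
  have h := Real.sum_le_exp_of_nonneg (x := 1.464) (by norm_num) 11
  simp [Finset.sum_range_succ] at h
  norm_num [Nat.factorial] at h; nlinarith [Real.exp_pos (1.464:ℝ)]

lemma EA2 : (-0.2634:ℝ) ≤ Real.log 0.7686 := by
  apply log_lower (by norm_num)
  have h := Real.sum_le_exp_of_nonneg (x := 0.2634) (by norm_num) 6
  simp [Finset.sum_range_succ] at h
  norm_num [Nat.factorial] at h; nlinarith [Real.exp_pos (0.2634:ℝ)]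

lemma EB1 : (-1.2662:ℝ) ≤ Real.log 0.282 := by
  apply log_lower (by norm_num)
  have h := Real.sum_le_exp_of_nonneg (x := 1.2662) (by norm_num) 10
  simp [Finset.sum_range_succ] at h
  norm_num [Nat.factorial] at h; nlinarith [Real.exp_pos (1.2662:ℝ)]

lemma EB2 : (-0.3315:ℝ) ≤ Real.log 0.718 := by
  apply log_lower (by norm_num)
  have h := Real.sum_le_exp_of_nonneg (x := 0.3315) (by norm_num) 6
  simp [Finset.sum_range_succ] at h
  norm_num [Nat.factorial] at h; nlinarith [Real.exp_pos (0.3315:ℝ)]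

lemma HA : Hent 0.2314 ≤ 0.5413 := by
  have h1 : (1:ℝ) - 0.2314 = 0.7686 := by norm_num
  unfold Hent; rw [h1]; nlinarith [EA1, EA2]

lemma HB : Hent 0.282 ≤ 0.5951 := by
  have h1 : (1:ℝ) - 0.282 = 0.718 := by norm_num
  unfold Hent; rw [h1]; nlinarith [EB1, EB2]

lemma lam_bounds (K : ℕ) (hK : 7 ≤ K) (lamK : ℝ) (hlam : 0 < lamK)
    (hQ : Qfun lamK = K) :
    6.916 ≤ lamK ∧ (K:ℝ) - 0.084 ≤ lamK ∧ 0.99 * Real.exp lamK ≤ exp2 lamK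
      ∧ 0 < exp2 lamK := by
  set x : ℝ := (K : ℝ) with hxdef
  have hx7 : (7:ℝ) ≤ x := by simp only [hxdef]; exact_mod_cast hK
  have hx0 : (0:ℝ) < x := by linarith
  have hexp2pos : 0 < exp2 lamK := by
    have := Real.add_one_lt_exp (x := lamK) (ne_of_gt hlam)
    unfold exp2; linarith
  have hkey : (x - lamK) * exp2 lamK = lamK^2 := by
    have h1 : lamK * (Real.exp lamK - 1) = x * exp2 lamK := by
      have h0 : lamK * (Real.exp lamK - 1) / (Real.exp lamK - 1 - lamK) = x := hQ
      have hne : Real.exp lamK - 1 - lamK ≠ 0 := by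
        have h2 : exp2 lamK = Real.exp lamK - 1 - lamK := rfl
        intro hc; rw [h2, hc] at hexp2pos; exact lt_irrefl 0 hexp2pos
      field_simp [hne] at h0
      unfold exp2; linarith
    unfold exp2 at *; nlinarith [h1]
  have hxl_eq : x - lamK = lamK^2 / exp2 lamK := by
    rw [eq_div_iff (ne_of_gt hexp2pos)]; exact hkey
  have hsq : (0:ℝ) < lamK^2 := by positivity
  have hxlam : 0 ≤ x - lamK := by rw [hxl_eq]; positivity
  have hT : lamK^2/2 + lamK^3/6 + lamK^4/24 + lamK^5/120 + lamK^6/720 + lamK^7/5040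
      ≤ exp2 lamK := by
    have h := Real.sum_le_exp_of_nonneg (x := lamK) hlam.le 8
    simp [Finset.sum_range_succ] at h
    norm_num [Nat.factorial] at h
    unfold exp2
    linarith
  have bound : ∀ c : ℝ, 0 < c → lamK^2 * c ≤ exp2 lamK → x - lamK ≤ 1/c := by
    intro c hc hTc
    rw [hxl_eq]
    calc lamK^2 / exp2 lamK ≤ lamK^2 / (lamK^2 * c) :=
          div_le_div_of_nonneg_left (le_of_lt hsq) (by positivity) hTc
      _ = 1/c := by field_simp
  have hb0 : x - lamK ≤ 2 := by
    have h := bound (1/2) (by norm_num) (by nlinarith [hT, pow_nonneg hlam.le 3, pow_nonneg hlam.le 4, pow_nonneg hlam.le 5, pow_nonneg hlam.le 6, pow_nonneg hlam.le 7])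
    norm_num at h; linarith
  have hl5 : 5 ≤ lamK := by linarith
  have p3 : 5*lamK^2 ≤ lamK^3 := by nlinarith [sq_nonneg lamK]
  have p4 : 5*lamK^3 ≤ lamK^4 := by nlinarith [pow_nonneg hlam.le 3]
  have p5 : 5*lamK^4 ≤ lamK^5 := by nlinarith [pow_nonneg hlam.le 4]
  have p6 : 5*lamK^5 ≤ lamK^6 := by nlinarith [pow_nonneg hlam.le 5]
  have p7 : 5*lamK^6 ≤ lamK^7 := by nlinarith [pow_nonneg hlam.le 6]
  have hb1 : x - lamK ≤ 0.204 := by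
    have h := bound (24720/5040) (by norm_num) (by linarith)
    norm_num at h; linarith
  have hl6 : 6.796 ≤ lamK := by linarith
  have q3 : 6.796*lamK^2 ≤ lamK^3 := by nlinarith [sq_nonneg lamK]
  have q4 : 6.796*lamK^3 ≤ lamK^4 := by nlinarith [pow_nonneg hlam.le 3]
  have q5 : 6.796*lamK^4 ≤ lamK^5 := by nlinarith [pow_nonneg hlam.le 4]
  have q6 : 6.796*lamK^5 ≤ lamK^6 := by nlinarith [pow_nonneg hlam.le 5]
  have q7 : 6.796*lamK^6 ≤ lamK^7 := by nlinarith [pow_nonneg hlam.le 6]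
  have hb2 : x - lamK ≤ 0.084 := by
    have h := bound 12.01 (by norm_num) (by linarith)
    norm_num at h; linarith
  have hlmin : 6.916 ≤ lamK := by linarith
  refine ⟨hlmin, by linarith, ?_, hexp2pos⟩
  have hA : Real.exp lamK = Real.exp 6.916 * Real.exp (lamK - 6.916) := by
    rw [← Real.exp_add]; ring_nf
  have hB : (1 : ℝ) + (lamK - 6.916) ≤ Real.exp (lamK - 6.916) := by
    have := Real.add_one_le_exp (lamK - 6.916); linarith
  have hC : 830 * (lamK - 5.916) ≤ Real.exp lamK := by
    rw [hA]
    have h1 : (0:ℝ) ≤ 1 + (lamK - 6.916) := by linarith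
    nlinarith [Real.exp_pos (lamK - 6.916), E2]
  have hD : 100 * (1 + lamK) ≤ Real.exp lamK := by linarith
  unfold exp2; linarith

lemma astar_ub (lamK : ℝ) (hlam : 0 < lamK) (hlmin : 6.916 ≤ lamK)
    (hexp2pos : 0 < exp2 lamK) (hE : 0.99 * Real.exp lamK ≤ exp2 lamK)
    (astar : ℝ)
    (hastar : astar = (1 / 2) * (1 - (1 / lamK) * Real.log (exp2 lamK / lamK ^ 2))) :
    astar ≤ 0.282 := by
  have hlogexp2 : lamK - 0.0101 ≤ Real.log (exp2 lamK) := by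
    have h1 : Real.log (0.99 * Real.exp lamK) ≤ Real.log (exp2 lamK) :=
      Real.log_le_log (by positivity) hE
    rw [Real.log_mul (by norm_num) (ne_of_gt (Real.exp_pos _)), Real.log_exp] at h1
    linarith [E1]
  have hloglam : Real.log lamK ≤ 0.9342 + 0.1446 * lamK := by
    have hd := Real.log_le_sub_one_of_pos (show (0:ℝ) < lamK/6.916 by positivity)
    rw [Real.log_div (ne_of_gt hlam) (by norm_num)] at hd
    have h2 : lamK/6.916 ≤ 0.1446 * lamK := by
      rw [div_le_iff₀ (by norm_num : (0:ℝ) < 6.916)]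
      nlinarith [hlam.le]
    linarith [E3]
  have hS : Real.log (exp2 lamK / lamK^2) = Real.log (exp2 lamK) - 2 * Real.log lamK := by
    rw [Real.log_div (ne_of_gt hexp2pos) (by positivity), Real.log_pow]
    push_cast; ring
  have hSlb : 0.436 * lamK ≤ Real.log (exp2 lamK / lamK^2) := by
    rw [hS]; linarith
  have hdiv : 0.436 ≤ (1/lamK) * Real.log (exp2 lamK / lamK^2) := by
    rw [one_div, inv_mul_eq_div, le_div_iff₀ hlam]
    linarith
  rw [hastar]; linarith

lemma beta_lb (K : ℕ) (hK : 7 ≤ K) : 1.16 / (K:ℝ) ≤ betaK K := by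
  set x : ℝ := (K : ℝ) with hxdef
  have hx7 : (7:ℝ) ≤ x := by simp only [hxdef]; exact_mod_cast hK
  have hx0 : (0:ℝ) < x := by linarith
  have hx1 : (0:ℝ) < x - 1 := by linarith
  have hv7 : 1/x ≤ 1/7 := by rw [div_le_div_iff₀ hx0 (by norm_num)]; linarith
  have hvpos : (0:ℝ) < 1/x := by positivity
  have hxv : x * (1/x) = 1 := by field_simp
  have hD : (0:ℝ) < 1/2 - 1/x := by linarith
  have hsq' : Real.log (Real.sqrt (x-1)) = Real.log (x-1) / 2 := Real.log_sqrt (le_of_lt hx1)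
  have hlx1 : Real.log (x-1) ≤ Real.log x - 1/x := by
    have hd := Real.log_le_sub_one_of_pos (show (0:ℝ) < (x-1)/x by positivity)
    rw [Real.log_div (ne_of_gt hx1) (ne_of_gt hx0)] at hd
    have he : (x-1)/x = 1 - 1/x := by field_simp
    rw [he] at hd; linarith
  have hlgx : Real.log x ≤ 0.9465 + 0.1429 * x := by
    have hd := Real.log_le_sub_one_of_pos (show (0:ℝ) < x/7 by positivity)
    rw [Real.log_div (ne_of_gt hx0) (by norm_num)] at hd
    have h2 : x/7 ≤ 0.1429 * x := by
      rw [div_le_iff₀ (by norm_num : (0:ℝ) < 7)]; nlinarith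
    linarith [E4]
  have hLup : Real.log x ≤ 0.42565*x - 0.934633 := by linarith
  have hkey2 : (1/x + Real.log (Real.sqrt (x-1)) - 1 + x/(2*(x-1)))
      ≤ (1/2 - 1/x) * (Real.log x - 0.1487) := by
    rw [hsq']
    have hA2 : x/(2*(x-1)) ≤ 1/2 + 7/12 * (1/x) := by
      rw [div_le_iff₀ (by positivity)]
      nlinarith [hxv, hv7, hvpos]
    nlinarith [mul_le_mul_of_nonneg_left hLup (le_of_lt hvpos), hlx1, hA2, hxv,
      mul_le_mul_of_nonneg_left hlx1 (le_of_lt hvpos)]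
  have hfin : Real.log 1.16 - Real.log x ≤
      -(1/x + Real.log (Real.sqrt (x-1)) - 1 + x/(2*(x-1))) / (1/2 - 1/x) := by
    rw [le_div_iff₀ hD]
    nlinarith [hkey2, E5, hD]
  calc 1.16 / x = Real.exp (Real.log (1.16/x)) := (Real.exp_log (by positivity)).symm
    _ ≤ betaK K := by
        apply Real.exp_le_exp.2
        rw [Real.log_div (by norm_num) (ne_of_gt hx0)]
        exact hfin

end Stmt10Aux

open Stmt10Aux in
theorem stmt10 (K : ℕ) (hK : 7 ≤ K)
    (lamK : ℝ) (hlam : 0 < lamK) (hQ : Qfun lamK = K)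
    (astar : ℝ)
    (hastar : astar = (1 / 2) * (1 - (1 / lamK) * Real.log (exp2 lamK / lamK ^ 2)))
    (a : ℝ) (ha1 : 0.99 * betaK K ≤ a) (ha2 : a ≤ astar) :
    LK K a (K : ℝ) lamK < -0.016 := by
  obtain ⟨hlmin, hlx, hE, hexp2pos⟩ := lam_bounds K hK lamK hlam hQ
  have hx7 : (7:ℝ) ≤ (K:ℝ) := by exact_mod_cast hK
  have hx0 : (0:ℝ) < (K:ℝ) := by linarith
  have hastar282 : astar ≤ 0.282 := astar_ub lamK hlam hlmin hexp2pos hE astar hastar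
  have ha282 : a ≤ 0.282 := le_trans ha2 hastar282
  have hbeta : 1.16 / (K:ℝ) ≤ betaK K := beta_lb K hK
  have hb0' : 0 < betaK K := Real.exp_pos _
  have ha0 : 0 < a := lt_of_lt_of_le (by nlinarith) ha1
  have h1a : (0:ℝ) < 1 - a := by linarith
  have h2la : 2.269 ≤ 2 * lamK * a := by
    have ha' : 1.1484 / (K:ℝ) ≤ a := by
      have h := mul_le_mul_of_nonneg_left hbeta (by norm_num : (0:ℝ) ≤ 0.99)
      rw [show (0.99:ℝ) * (1.16 / (K:ℝ)) = 1.1484/(K:ℝ) by ring] at h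
      linarith
    have h2 : 2.269 * (K:ℝ) ≤ 2 * lamK * 1.1484 := by nlinarith
    have h3 : 2.269 ≤ 2 * lamK * (1.1484/(K:ℝ)) := by
      rw [show 2*lamK*(1.1484/(K:ℝ)) = (2*lamK*1.1484)/(K:ℝ) by ring, le_div_iff₀ hx0]
      linarith
    have h4 : 2*lamK*(1.1484/(K:ℝ)) ≤ 2*lamK*a :=
      mul_le_mul_of_nonneg_left ha' (by linarith)
    linarith
  -- main identity
  have hLK : LK K a (K:ℝ) lamK = Hent a +
      Real.log ((exp2 lamK + exp2 (lamK * (1 - 2*a))) / (2 * exp2 lamK)) := by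
    have hKne : ((K:ℝ)) ≠ 0 := by positivity
    unfold LK JK
    rw [div_self (ne_of_gt ha0), div_self (ne_of_gt h1a), Real.log_one, mul_zero, mul_zero]
    rw [show (1 - a + a : ℝ) = 1 by ring, mul_one]
    rw [show ((1:ℝ) - a - a) = 1 - 2*a by ring]
    field_simp
    ring
  have hexp2u_nonneg : 0 ≤ exp2 (lamK * (1 - 2*a)) := by
    have := Real.add_one_le_exp (lamK * (1 - 2*a))
    unfold exp2; linarith
  have hexp2u_le : Real.exp (2*lamK*a) * exp2 (lamK * (1 - 2*a)) ≤ Real.exp lamK := by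
    have h1 : exp2 (lamK * (1 - 2*a)) ≤ Real.exp (lamK * (1 - 2*a)) := by
      unfold exp2; nlinarith [hlam.le, ha282]
    have h2 : Real.exp (2*lamK*a) * Real.exp (lamK * (1 - 2*a)) = Real.exp lamK := by
      rw [← Real.exp_add]; ring_nf
    nlinarith [Real.exp_pos (2*lamK*a), Real.exp_pos (lamK * (1 - 2*a))]
  have hRpos : 0 < (exp2 lamK + exp2 (lamK * (1 - 2*a))) / (2 * exp2 lamK) := by positivity
  rw [hLK]
  rcases le_or_gt a 0.2314 with hA | hB
  · -- Case A : small a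
    have hHa : Hent a ≤ 0.5413 :=
      le_trans (hent_mono (le_of_lt ha0) hA (by norm_num)) HA
    have he : (9.66:ℝ) ≤ Real.exp (2*lamK*a) :=
      le_trans E6 (Real.exp_le_exp.2 h2la)
    have h3 : 9.66 * exp2 (lamK * (1 - 2*a)) ≤ Real.exp lamK := by
      nlinarith [hexp2u_le, mul_le_mul_of_nonneg_right he hexp2u_nonneg]
    have hR : (exp2 lamK + exp2 (lamK * (1 - 2*a))) / (2 * exp2 lamK) ≤ 0.5524 := by
      rw [div_le_iff₀ (by positivity)]
      nlinarith [h3, hE]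
    have hlogR : Real.log ((exp2 lamK + exp2 (lamK * (1 - 2*a))) / (2 * exp2 lamK))
        ≤ -0.565 := by
      apply log_upper hRpos
      refine le_trans hR (le_trans ?_ (exp_neg_ge_pow8 (d := 0.565) (by norm_num)))
      norm_num
    linarith
  · -- Case B : larger a
    have hHa : Hent a ≤ 0.5951 :=
      le_trans (hent_mono (le_of_lt ha0) ha282 (by norm_num)) HB
    have h32 : (3.2:ℝ) ≤ 2 * lamK * a := by nlinarith
    have he : (24.49:ℝ) ≤ Real.exp (2*lamK*a) :=
      le_trans E7 (Real.exp_le_exp.2 h32)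
    have h3 : 24.49 * exp2 (lamK * (1 - 2*a)) ≤ Real.exp lamK := by
      nlinarith [hexp2u_le, mul_le_mul_of_nonneg_right he hexp2u_nonneg]
    have hR : (exp2 lamK + exp2 (lamK * (1 - 2*a))) / (2 * exp2 lamK) ≤ 0.5207 := by
      rw [div_le_iff₀ (by positivity)]
      nlinarith [h3, hE]
    have hlogR : Real.log ((exp2 lamK + exp2 (lamK * (1 - 2*a))) / (2 * exp2 lamK))
        ≤ -0.62 := by
      apply log_upper hRpos
      refine le_trans hR (le_trans ?_ (exp_neg_ge_pow8 (d := 0.62) (by norm_num)))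
      norm_num
    linarith
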